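/- arXiv:2311.05872 — 4 statements merged into one kernel-verified Lean document; each statement's English description precedes it below -/
import Mathlib

section
/- Let S be a unitary 2n×2n matrix written in block form S = [[T₊, R₋],[R₊, T₋]] with n×n blocks, and suppose n is odd and R₊ is skew-symmetric (R₊ᵀ = -R₊). Then Tr(T₊* T₊) ≥ 1. -/
open Matrix

/-- For a unitary `2n×2n` scattering matrix `S = [[T₊,R₋],[R₊,T₋]]` with `n` odd and
skew-symmetric reflection block `R₊`, the transmission satisfies `Tr(T₊* T₊) ≥ 1`. -/
theorem trace_transmission_ge_one (n : ℕ) (hn : Odd n)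
    (Tp Rm Rp Tm : Matrix (Fin n) (Fin n) ℂ)
    (hS : Matrix.fromBlocks Tp Rm Rp Tm ∈ Matrix.unitaryGroup (Fin n ⊕ Fin n) ℂ)
    (hRp : Rpᵀ = -Rp) :
    1 ≤ ((Tpᴴ * Tp).trace).re := by
  have hU := Matrix.mem_unitaryGroup_iff'.mp hS
  rw [Matrix.star_eq_conjTranspose, Matrix.fromBlocks_conjTranspose,
    Matrix.fromBlocks_multiply, ← Matrix.fromBlocks_one] at hU
  have h1 : Tpᴴ * Tp + Rpᴴ * Rp = 1 := by
    have := congrArg Matrix.toBlocks₁₁ hU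
    simpa only [Matrix.toBlocks_fromBlocks₁₁] using this
  -- det Rp = 0
  have hdet : Rp.det = 0 := by
    have h2 : Rp.det = -Rp.det := by
      conv_lhs => rw [← Matrix.det_transpose, hRp, Matrix.det_neg]
      rw [Fintype.card_fin, hn.neg_one_pow]
      ring
    have : (2 : ℂ) * Rp.det = 0 := by linear_combination h2
    simpa using this
  obtain ⟨v, hv, hv0⟩ := Matrix.exists_mulVec_eq_zero_iff.mpr hdet
  set c : ℝ := ∑ j, Complex.normSq (v j) with hc
  have hcpos : 0 < c := by
    have h3 : ∃ j, v j ≠ 0 := by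
      by_contra h
      push_neg at h
      exact hv (funext h)
    obtain ⟨j, hj⟩ := h3
    exact Finset.sum_pos' (fun i _ => Complex.normSq_nonneg _)
      ⟨j, Finset.mem_univ j, Complex.normSq_pos.mpr hj⟩
  -- (Tpᴴ * Tp).mulVec v = v
  have hTv : (Tpᴴ * Tp).mulVec v = v := by
    have h3 : (Rpᴴ * Rp).mulVec v = 0 := by
      rw [← Matrix.mulVec_mulVec, hv0, Matrix.mulVec_zero]
    have h4 : (Tpᴴ * Tp).mulVec v + (Rpᴴ * Rp).mulVec v = v := by
      rw [← Matrix.add_mulVec, h1, Matrix.one_mulVec]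
    rw [h3, add_zero] at h4
    exact h4
  -- ∑ i, normSq ((Tp.mulVec v) i) = c
  have hA : ∑ i, Complex.normSq ((Tp.mulVec v) i) = c := by
    have h5 : star (Tp.mulVec v) ⬝ᵥ (Tp.mulVec v) = star v ⬝ᵥ v := by
      rw [Matrix.star_mulVec, ← Matrix.dotProduct_mulVec, Matrix.mulVec_mulVec, hTv]
    have h6 : ∀ w : Fin n → ℂ, star w ⬝ᵥ w = ((∑ j, Complex.normSq (w j) : ℝ) : ℂ) := by
      intro w
      simp only [dotProduct, Pi.star_apply, Complex.star_def]
      push_cast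
      congr 1
      ext j
      exact (Complex.normSq_eq_conj_mul_self).symm
    rw [h6, h6] at h5
    exact_mod_cast h5
  -- Cauchy-Schwarz rowwise
  have hCS : ∀ i, Complex.normSq ((Tp.mulVec v) i) ≤ (∑ j, Complex.normSq (Tp i j)) * c := by
    intro i
    have h7 : ‖(Tp.mulVec v) i‖ ≤ ∑ j, ‖Tp i j‖ * ‖v j‖ := by
      simp only [Matrix.mulVec, dotProduct]
      refine le_trans (norm_sum_le _ _) ?_
      apply Finset.sum_le_sum
      intro j _
      rw [norm_mul]
    have h8 : Complex.normSq ((Tp.mulVec v) i) ≤ (∑ j, ‖Tp i j‖ * ‖v j‖) ^ 2 := by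
      rw [Complex.normSq_eq_norm_sq]
      exact pow_le_pow_left₀ (norm_nonneg _) h7 2
    refine h8.trans ?_
    refine le_trans (Finset.sum_mul_sq_le_sq_mul_sq Finset.univ _ _) ?_
    apply le_of_eq
    congr 1
    · exact Finset.sum_congr rfl fun j _ => (Complex.normSq_eq_norm_sq _).symm.trans rfl
    · exact Finset.sum_congr rfl fun j _ => (Complex.sq_norm _)
  -- trace real part
  have hTr : ((Tpᴴ * Tp).trace).re = ∑ i, ∑ j, Complex.normSq (Tp i j) := by
    have : (Tpᴴ * Tp).trace = ∑ i, ∑ j, (starRingEnd ℂ) (Tp j i) * Tp j i := by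
      simp [Matrix.trace, Matrix.diag, Matrix.mul_apply, Matrix.conjTranspose_apply]
    rw [this]
    rw [Complex.re_sum]
    rw [Finset.sum_comm]
    congr 1
    ext j
    rw [Complex.re_sum]
    congr 1
    ext i
    rw [← Complex.normSq_eq_conj_mul_self]
    simp
  -- combine
  have hsum : c ≤ (∑ i, ∑ j, Complex.normSq (Tp i j)) * c := by
    calc c = ∑ i, Complex.normSq ((Tp.mulVec v) i) := hA.symm
    _ ≤ ∑ i, (∑ j, Complex.normSq (Tp i j)) * c := Finset.sum_le_sum fun i _ => hCS i
    _ = (∑ i, ∑ j, Complex.normSq (Tp i j)) * c := by rw [← Finset.sum_mul]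
  rw [hTr]
  have h9 : 1 * c ≤ (∑ i, ∑ j, Complex.normSq (Tp i j)) * c := by
    rw [one_mul]; exact hsum
  exact le_of_mul_le_mul_right h9 hcpos
end

section
/- Fix ξ, E ∈ ℝ and n ≥ 1 with E² = ξ² + 2n and E ≠ ξ. Then the function φ(y) = c (√(2n) φ_{n-1}(y), (E-ξ) φ_n(y))ᵀ, with c = (2n + (E-ξ)²)^{-1/2}, is a normalized L²(ℝ; ℂ²) solution of the eigenvalue problem [[ξ, 𝔞],[𝔞*, -ξ]] φ = E φ, where 𝔞 = ∂_y + y and φ_k are normalized Hermite functions. -/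
open MeasureTheory

/-- The annihilation operator `𝔞 = d/dy + y`. -/
noncomputable def annOp (f : ℝ → ℝ) : ℝ → ℝ := fun y => deriv f y + y * f y

/-- The creation operator `𝔞* = -d/dy + y`. -/
noncomputable def creOp (f : ℝ → ℝ) : ℝ → ℝ := fun y => -deriv f y + y * f y

/-- The normalized Hermite functions: `φ₀(y) = π^{-1/4} e^{-y²/2}` and
`φ_{n+1} = (2(n+1))^{-1/2} 𝔞* φ_n`. -/
noncomputable def hermiteFun : ℕ → ℝ → ℝ
  | 0 => fun y => Real.pi ^ (-(1 : ℝ) / 4) * Real.exp (-y ^ 2 / 2)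
  | n + 1 => fun y => (Real.sqrt (2 * (n + 1)))⁻¹ * creOp (hermiteFun n) y

/-!
Both components are Hermite functions, so the ladder relations `𝔞 φ_n = √(2n) φ_{n-1}` and
`𝔞* φ_{n-1} = √(2n) φ_n` turn the eigenvalue equations into the scalar identities
`ξ + (E - ξ) = E` and `2n = E² - ξ² = (E - ξ)(E + ξ)`, and orthonormality reduces the norm to
`c² (2n + (E - ξ)²) = 1`. The ladder relations and `‖φ_n‖ = 1` are proved by writing
`φ_n = p_n e^{-y²/2}` with polynomials `p_n`: on such functions `𝔞` acts as `p ↦ p'` and `𝔞*` as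
`p ↦ 2Xp - p'`, whose commutator is `2`, and `𝔞*` is the adjoint of `𝔞` by integration by parts,
so `‖φ_{n+1}‖² = (2(n+1))^{-1/2} ⟨φ_n, 𝔞 φ_{n+1}⟩ = ‖φ_n‖²`.
-/

section LadderOperators

lemma annOp_const_mul (a : ℝ) (f : ℝ → ℝ) :
    annOp (fun y => a * f y) = fun y => a * annOp f y := by
  funext y
  simp only [annOp, deriv_const_mul_field']
  ring

lemma creOp_const_mul (a : ℝ) (f : ℝ → ℝ) :
    creOp (fun y => a * f y) = fun y => a * creOp f y := by
  funext y
  simp only [creOp, deriv_const_mul_field']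
  ring

lemma integral_creOp_mul_eq_integral_mul_annOp {f g : ℝ → ℝ}
    (hf : Differentiable ℝ f) (hg : Differentiable ℝ g) (hfg : Integrable fun y => f y * g y)
    (hcre : Integrable fun y => creOp f y * g y) (hann : Integrable fun y => f y * annOp g y) :
    ∫ y, creOp f y * g y = ∫ y, f y * annOp g y := by
  have hderiv : ∀ y, HasDerivAt (fun y => f y * g y)
      (f y * annOp g y - creOp f y * g y) y := fun y =>
    ((hf y).hasDerivAt.mul (hg y).hasDerivAt).congr_deriv (by simp only [annOp, creOp]; ring)
  have hzero := integral_eq_zero_of_hasDerivAt_of_integrable hderiv (hann.sub hcre) hfg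
  rw [integral_sub hann hcre, sub_eq_zero] at hzero
  exact hzero.symm

end LadderOperators

section PolyGauss

open Polynomial Real

noncomputable def polyGauss (p : ℝ[X]) : ℝ → ℝ := fun y => p.eval y * exp (-y ^ 2 / 2)

lemma hasDerivAt_polyGauss (p : ℝ[X]) (y : ℝ) :
    HasDerivAt (polyGauss p) (polyGauss (derivative p - X * p) y) y := by
  have hexp : HasDerivAt (fun y : ℝ => -y ^ 2 / 2) (-y) y :=
    ((hasDerivAt_pow 2 y).neg.div_const 2).congr_deriv (by norm_num; ring)
  exact ((p.hasDerivAt y).mul hexp.exp).congr_deriv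
    (by simp only [polyGauss, eval_sub, eval_mul, eval_X]; ring)

lemma differentiable_polyGauss (p : ℝ[X]) : Differentiable ℝ (polyGauss p) :=
  fun y => (hasDerivAt_polyGauss p y).differentiableAt

lemma polyGauss_C_mul (a : ℝ) (p : ℝ[X]) :
    polyGauss (C a * p) = fun y => a * polyGauss p y := by
  funext y
  simp only [polyGauss, eval_mul, eval_C]
  ring

lemma annOp_polyGauss (p : ℝ[X]) : annOp (polyGauss p) = polyGauss (derivative p) := by
  funext y
  simp only [annOp, (hasDerivAt_polyGauss p y).deriv, polyGauss, eval_sub, eval_mul, eval_X]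
  ring

lemma creOp_polyGauss (p : ℝ[X]) :
    creOp (polyGauss p) = polyGauss (2 * X * p - derivative p) := by
  funext y
  simp only [creOp, (hasDerivAt_polyGauss p y).deriv, polyGauss, eval_sub, eval_mul, eval_X,
    eval_ofNat]
  ring

lemma polyGauss_mul_polyGauss (p q : ℝ[X]) (y : ℝ) :
    polyGauss p y * polyGauss q y = (p * q).eval y * exp (-y ^ 2) := by
  rw [polyGauss, polyGauss, eval_mul, mul_mul_mul_comm, ← exp_add]
  ring_nf

lemma integrable_eval_mul_exp_neg_sq (p : ℝ[X]) :
    Integrable fun y => p.eval y * exp (-y ^ 2) := by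
  induction p using Polynomial.induction_on' with
  | add p q hp hq =>
    simp only [eval_add, add_mul]
    exact hp.add hq
  | monomial m a =>
    have h := integrable_rpow_mul_exp_neg_mul_sq one_pos
      (show -1 < (m : ℝ) by linarith [m.cast_nonneg (α := ℝ)])
    simp only [rpow_natCast, neg_mul, one_mul] at h
    simpa only [eval_monomial, mul_assoc] using h.const_mul a

lemma integrable_polyGauss_mul_polyGauss (p q : ℝ[X]) :
    Integrable fun y => polyGauss p y * polyGauss q y := by
  simpa only [polyGauss_mul_polyGauss] using integrable_eval_mul_exp_neg_sq (p * q)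

lemma integral_creOp_polyGauss_mul (p q : ℝ[X]) :
    ∫ y, creOp (polyGauss p) y * polyGauss q y = ∫ y, polyGauss p y * annOp (polyGauss q) y := by
  refine integral_creOp_mul_eq_integral_mul_annOp (differentiable_polyGauss p)
    (differentiable_polyGauss q) (integrable_polyGauss_mul_polyGauss p q) ?_ ?_
  · rw [creOp_polyGauss]; exact integrable_polyGauss_mul_polyGauss _ _
  · rw [annOp_polyGauss]; exact integrable_polyGauss_mul_polyGauss _ _

end PolyGauss

section Hermite

open Polynomial Real

noncomputable def hermitePoly : ℕ → ℝ[X]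
  | 0 => C (π ^ (-(1 : ℝ) / 4))
  | n + 1 => C (√(2 * (n + 1)))⁻¹ * (2 * X * hermitePoly n - derivative (hermitePoly n))

lemma hermiteFun_eq_polyGauss (n : ℕ) : hermiteFun n = polyGauss (hermitePoly n) := by
  induction n with
  | zero =>
    funext y
    simp only [hermiteFun, hermitePoly, polyGauss, eval_C]
  | succ n ih =>
    funext y
    rw [hermiteFun, ih, creOp_polyGauss, hermitePoly, polyGauss_C_mul]

lemma sqrt_two_mul_succ_ne_zero (k : ℕ) : √(2 * (k + 1)) ≠ 0 :=
  (sqrt_pos.2 (by positivity)).ne'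

lemma C_sqrt_mul_hermitePoly_succ (k : ℕ) :
    C √(2 * (k + 1)) * hermitePoly (k + 1) = 2 * X * hermitePoly k - derivative (hermitePoly k) := by
  rw [hermitePoly, ← mul_assoc, ← C_mul, mul_inv_cancel₀ (sqrt_two_mul_succ_ne_zero k), C_1,
    one_mul]

lemma derivative_hermitePoly_succ (k : ℕ) :
    derivative (hermitePoly (k + 1)) = C √(2 * (k + 1)) * hermitePoly k := by
  induction k with
  | zero =>
    simp only [hermitePoly, derivative_mul, derivative_C, derivative_X, derivative_ofNat,
      zero_mul, mul_zero, zero_add, add_zero, sub_zero, mul_one]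
    rw [← map_ofNat C 2, ← mul_assoc, ← C_mul]
    congr 2
    rw [inv_mul_eq_div, Nat.cast_zero, zero_add, mul_one, div_sqrt]
  | succ k ih =>
    apply mul_left_cancel₀ (C_ne_zero.2 (sqrt_two_mul_succ_ne_zero (k + 1)))
    rw [← derivative_C_mul, C_sqrt_mul_hermitePoly_succ, ← mul_assoc, ← C_mul,
      mul_self_sqrt (by positivity)]
    simp only [derivative_sub, derivative_mul, derivative_C, derivative_X, derivative_ofNat, ih]
    have hss : C √(2 * (k + 1)) * C √(2 * (k + 1)) = C (2 * ((k : ℝ) + 1)) := by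
      rw [← C_mul, mul_self_sqrt (by positivity)]
    have hcast : C (2 * (((k + 1 : ℕ) : ℝ) + 1)) = C (2 * ((k : ℝ) + 1)) + 2 := by
      push_cast
      simp only [map_mul, map_add, map_ofNat, map_natCast, map_one]
      ring
    linear_combination -C √(2 * (k + 1)) * C_sqrt_mul_hermitePoly_succ k
      + hermitePoly (k + 1) * hss - hermitePoly (k + 1) * hcast

lemma annOp_hermiteFun_succ (k : ℕ) :
    annOp (hermiteFun (k + 1)) = fun y => √(2 * (k + 1)) * hermiteFun k y := by
  rw [hermiteFun_eq_polyGauss, hermiteFun_eq_polyGauss, annOp_polyGauss,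
    derivative_hermitePoly_succ, polyGauss_C_mul]

lemma creOp_hermiteFun (k : ℕ) :
    creOp (hermiteFun k) = fun y => √(2 * (k + 1)) * hermiteFun (k + 1) y := by
  funext y
  rw [hermiteFun, mul_inv_cancel_left₀ (sqrt_two_mul_succ_ne_zero k)]

lemma integrable_hermiteFun_sq (k : ℕ) : Integrable fun y => hermiteFun k y ^ 2 := by
  simpa only [sq, hermiteFun_eq_polyGauss] using integrable_polyGauss_mul_polyGauss _ _

lemma integral_hermiteFun_zero_sq : ∫ y, hermiteFun 0 y ^ 2 = 1 := by
  have hsq : ∀ y, hermiteFun 0 y ^ 2 = π ^ (-(1 : ℝ) / 2) * exp (-1 * y ^ 2) := by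
    intro y
    rw [hermiteFun, mul_pow, ← rpow_natCast, ← rpow_mul pi_pos.le, sq, ← exp_add]
    norm_num
  simp only [hsq, integral_const_mul, integral_gaussian, div_one, sqrt_eq_rpow,
    ← rpow_add pi_pos]
  norm_num

lemma integral_hermiteFun_sq (k : ℕ) : ∫ y, hermiteFun k y ^ 2 = 1 := by
  induction k with
  | zero => exact integral_hermiteFun_zero_sq
  | succ k ih =>
    calc ∫ y, hermiteFun (k + 1) y ^ 2
        = ∫ y, (√(2 * (k + 1)))⁻¹ * (creOp (hermiteFun k) y * hermiteFun (k + 1) y) := by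
          congr 1 with y
          rw [sq, ← mul_assoc]
          rfl
      _ = (√(2 * (k + 1)))⁻¹ * ∫ y, hermiteFun k y * annOp (hermiteFun (k + 1)) y := by
          simp only [integral_const_mul, hermiteFun_eq_polyGauss, integral_creOp_polyGauss_mul]
      _ = ∫ y, hermiteFun k y ^ 2 := by
          simp only [annOp_hermiteFun_succ, mul_left_comm _ √(2 * (k + 1)), integral_const_mul,
            mul_inv_cancel_left₀ (sqrt_two_mul_succ_ne_zero k), sq]
      _ = 1 := ih

end Hermite

theorem dirac_generalized_eigenfunction_general (ξ E : ℝ) (n : ℕ) (hn : 1 ≤ n)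
    (hE : E ^ 2 = ξ ^ 2 + 2 * n)
    (c : ℝ) (hc : c = (Real.sqrt (2 * n + (E - ξ) ^ 2))⁻¹)
    (φ1 φ2 : ℝ → ℝ)
    (hφ1 : φ1 = fun y => c * (Real.sqrt (2 * n) * hermiteFun (n - 1) y))
    (hφ2 : φ2 = fun y => c * ((E - ξ) * hermiteFun n y)) :
    (∀ y : ℝ, ξ * φ1 y + annOp φ2 y = E * φ1 y) ∧
    (∀ y : ℝ, creOp φ1 y - ξ * φ2 y = E * φ2 y) ∧
    (∫ y : ℝ, ((φ1 y) ^ 2 + (φ2 y) ^ 2)) = 1 := by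
  obtain ⟨m, rfl⟩ : ∃ m, n = m + 1 := ⟨n - 1, by omega⟩
  set s := √(2 * ((m : ℝ) + 1)) with hs
  have hss : s ^ 2 = 2 * ((m + 1 : ℕ) : ℝ) := by push_cast; exact Real.sq_sqrt (by positivity)
  have hφ1' : φ1 = fun y => (c * s) * hermiteFun m y := by
    rw [hφ1, Nat.add_sub_cancel, hs]; push_cast; simp only [mul_assoc]
  have hφ2' : φ2 = fun y => (c * (E - ξ)) * hermiteFun (m + 1) y := by
    rw [hφ2]; simp only [mul_assoc]
  refine ⟨fun y => ?_, fun y => ?_, ?_⟩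
  · rw [hφ1', hφ2', annOp_const_mul, annOp_hermiteFun_succ]
    ring
  · rw [hφ1', hφ2', creOp_const_mul, creOp_hermiteFun]
    linear_combination (c * hermiteFun (m + 1) y) * (hss - hE)
  · have hD : 0 < 2 * ((m + 1 : ℕ) : ℝ) + (E - ξ) ^ 2 := by positivity
    simp only [hφ1', hφ2', mul_pow]
    rw [integral_add ((integrable_hermiteFun_sq m).const_mul _)
        ((integrable_hermiteFun_sq (m + 1)).const_mul _),
      integral_const_mul, integral_const_mul, integral_hermiteFun_sq, integral_hermiteFun_sq, hss,
      hc, inv_pow, Real.sq_sqrt hD.le]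
    field_simp

/-- For `E² = ξ² + 2n`, `E ≠ ξ`, `n ≥ 1`, the vector function
`φ = c (√(2n) φ_{n-1}, (E-ξ) φ_n)` with `c = (2n + (E-ξ)²)^{-1/2}` is a normalized
solution of the eigenvalue problem `[[ξ, 𝔞],[𝔞*, -ξ]] φ = E φ`. -/
theorem dirac_generalized_eigenfunction (ξ E : ℝ) (n : ℕ) (hn : 1 ≤ n)
    (hE : E ^ 2 = ξ ^ 2 + 2 * n) (hEξ : E ≠ ξ)
    (c : ℝ) (hc : c = (Real.sqrt (2 * n + (E - ξ) ^ 2))⁻¹)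
    (φ1 φ2 : ℝ → ℝ)
    (hφ1 : φ1 = fun y => c * (Real.sqrt (2 * n) * hermiteFun (n - 1) y))
    (hφ2 : φ2 = fun y => c * ((E - ξ) * hermiteFun n y)) :
    (∀ y : ℝ, ξ * φ1 y + annOp φ2 y = E * φ1 y) ∧
    (∀ y : ℝ, creOp φ1 y - ξ * φ2 y = E * φ2 y) ∧
    (∫ y : ℝ, ((φ1 y) ^ 2 + (φ2 y) ^ 2)) = 1 :=
  dirac_generalized_eigenfunction_general ξ E n hn hE c hc φ1 φ2 hφ1 hφ2
end

section
/- Let S¹ = [[T₊¹, R₋¹],[R₊¹, T₋¹]] and S² = [[T₊², R₋²],[R₊², T₋²]] be two unitary 2n×2n scattering matrices (in n×n blocks) such that I - R₋¹ R₊² is invertible. Then the merged matrix with blocks T₊ = T₊²(I - R₋¹R₊²)⁻¹T₊¹, R₋ = R₋² + T₊²(I - R₋¹R₊²)⁻¹R₋¹T₋², R₊ = R₊¹ + T₋¹(I - R₊²R₋¹)⁻¹R₊²T₊¹, T₋ = T₋¹(I - R₊²R₋¹)⁻¹T₋², is unitary. -/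
open Matrix

section Aux

variable {R : Type*} [Ring R]

private lemma aux_axy {x y a : R} (ha1 : a * (1 - x*y) = 1) : a * (x*y) = a - 1 := by
  calc a * (x*y) = a - a * (1 - x*y) := by noncomm_ring
    _ = a - 1 := by rw [ha1]

private lemma aux_xya {x y a : R} (ha2 : (1 - x*y) * a = 1) : (x*y) * a = a - 1 := by
  calc (x*y) * a = a - (1 - x*y) * a := by noncomm_ring
    _ = a - 1 := by rw [ha2]

private lemma aux_xb {x y a b : R} (ha1 : a * (1 - x*y) = 1) (hb2 : (1 - y*x) * b = 1) :
    x * b = a * x := by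
  calc x * b = (a * (1 - x*y)) * (x * b) := by rw [ha1, one_mul]
    _ = a * (x * ((1 - y*x) * b)) := by noncomm_ring
    _ = a * x := by rw [hb2, mul_one]

private lemma aux_unit {x y a : R} (ha1 : a * (1 - x*y) = 1) (ha2 : (1 - x*y) * a = 1) :
    IsUnit (1 - y*x) := by
  refine ⟨⟨1 - y*x, 1 + y*a*x, ?_, ?_⟩, rfl⟩
  · calc (1 - y*x) * (1 + y*a*x) = 1 - y*x + y*((a - (x*y)*a)*x) := by noncomm_ring
      _ = 1 - y*x + y*((a - (a - 1))*x) := by rw [aux_xya ha2]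
      _ = 1 := by noncomm_ring
  · calc (1 + y*a*x) * (1 - y*x) = 1 - y*x + y*((a - a*(x*y))*x) := by noncomm_ring
      _ = 1 - y*x + y*((a - (a - 1))*x) := by rw [aux_axy ha1]
      _ = 1 := by noncomm_ring

end Aux

set_option maxHeartbeats 1000000 in
/-- The Redheffer star product of two unitary scattering matrices is unitary. -/
theorem redheffer_star_unitary (n : ℕ)
    (Tp1 Rm1 Rp1 Tm1 Tp2 Rm2 Rp2 Tm2 : Matrix (Fin n) (Fin n) ℂ)
    (hS1 : Matrix.fromBlocks Tp1 Rm1 Rp1 Tm1 ∈ Matrix.unitaryGroup (Fin n ⊕ Fin n) ℂ)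
    (hS2 : Matrix.fromBlocks Tp2 Rm2 Rp2 Tm2 ∈ Matrix.unitaryGroup (Fin n ⊕ Fin n) ℂ)
    (hinv : IsUnit (1 - Rm1 * Rp2)) :
    Matrix.fromBlocks
      (Tp2 * (1 - Rm1 * Rp2)⁻¹ * Tp1)
      (Rm2 + Tp2 * (1 - Rm1 * Rp2)⁻¹ * Rm1 * Tm2)
      (Rp1 + Tm1 * (1 - Rp2 * Rm1)⁻¹ * Rp2 * Tp1)
      (Tm1 * (1 - Rp2 * Rm1)⁻¹ * Tm2)
      ∈ Matrix.unitaryGroup (Fin n ⊕ Fin n) ℂ := by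
  set p := Tp1 with hp
  set x := Rm1 with hxdef
  set q := Rp1 with hq
  set r := Tm1 with hr
  set u := Tp2 with hu
  set v := Rm2 with hv
  set y := Rp2 with hydef
  set w := Tm2 with hw
  set a := (1 - x * y)⁻¹ with ha
  set b := (1 - y * x)⁻¹ with hb
  -- inverse facts
  have hdet1 : IsUnit (1 - x * y).det := (Matrix.isUnit_iff_isUnit_det _).mp hinv
  have hA1 : a * (1 - x*y) = 1 := by rw [ha]; exact Matrix.nonsing_inv_mul _ hdet1
  have hA2 : (1 - x*y) * a = 1 := by rw [ha]; exact Matrix.mul_nonsing_inv _ hdet1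
  have hdet2 : IsUnit (1 - y * x).det :=
    (Matrix.isUnit_iff_isUnit_det _).mp (aux_unit hA1 hA2)
  have hB1 : b * (1 - y*x) = 1 := by rw [hb]; exact Matrix.nonsing_inv_mul _ hdet2
  have hB2 : (1 - y*x) * b = 1 := by rw [hb]; exact Matrix.mul_nonsing_inv _ hdet2
  clear_value a b p x q r u v w y
  have hAs1 : aᴴ * (1 - yᴴ*xᴴ) = 1 := by
    have h := congrArg Matrix.conjTranspose hA2
    simpa only [Matrix.conjTranspose_mul, Matrix.conjTranspose_sub,
      Matrix.conjTranspose_one] using h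
  have hAs2 : (1 - yᴴ*xᴴ) * aᴴ = 1 := by
    have h := congrArg Matrix.conjTranspose hA1
    simpa only [Matrix.conjTranspose_mul, Matrix.conjTranspose_sub,
      Matrix.conjTranspose_one] using h
  have hBs1 : bᴴ * (1 - xᴴ*yᴴ) = 1 := by
    have h := congrArg Matrix.conjTranspose hB2
    simpa only [Matrix.conjTranspose_mul, Matrix.conjTranspose_sub,
      Matrix.conjTranspose_one] using h
  have hBs2 : (1 - xᴴ*yᴴ) * bᴴ = 1 := by
    have h := congrArg Matrix.conjTranspose hB1
    simpa only [Matrix.conjTranspose_mul, Matrix.conjTranspose_sub,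
      Matrix.conjTranspose_one] using h
  -- derived identities
  have hxb : x * b = a * x := aux_xb hA1 hB2
  have hya : y * a = b * y := aux_xb hB1 hA2
  have hxb' : yᴴ * bᴴ = aᴴ * yᴴ := aux_xb hAs1 hBs2
  have hya' : xᴴ * aᴴ = bᴴ * xᴴ := aux_xb hBs1 hAs2
  have haxy : a * (x*y) = a - 1 := aux_axy hA1
  have hbyx : b * (y*x) = b - 1 := aux_axy hB1
  have haxy' : aᴴ * (yᴴ*xᴴ) = aᴴ - 1 := aux_axy hAs1
  have hbyx' : bᴴ * (xᴴ*yᴴ) = bᴴ - 1 := aux_axy hBs1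
  -- block equations from unitarity
  rw [Matrix.mem_unitaryGroup_iff', Matrix.star_eq_conjTranspose,
    Matrix.fromBlocks_conjTranspose, Matrix.fromBlocks_multiply,
    ← Matrix.fromBlocks_one, Matrix.fromBlocks_inj] at hS1 hS2
  obtain ⟨e1, e2, e2', e3⟩ := hS1
  obtain ⟨f1, f2, f2', f3⟩ := hS2
  have he1 : qᴴ*q = 1 - pᴴ*p := eq_sub_of_add_eq' e1
  have he2 : qᴴ*r = -(pᴴ*x) := eq_neg_of_add_eq_zero_right e2
  have he2' : rᴴ*q = -(xᴴ*p) := eq_neg_of_add_eq_zero_right e2'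
  have he3 : rᴴ*r = 1 - xᴴ*x := eq_sub_of_add_eq' e3
  have hf1 : uᴴ*u = 1 - yᴴ*y := eq_sub_of_add_eq f1
  have hf2 : uᴴ*v = -(yᴴ*w) := eq_neg_of_add_eq_zero_left f2
  have hf2' : vᴴ*u = -(wᴴ*y) := eq_neg_of_add_eq_zero_left f2'
  have hf3 : vᴴ*v = 1 - wᴴ*w := eq_sub_of_add_eq f3
  -- the four block identities of the merged matrix
  have key11 : (u*a*p)ᴴ * (u*a*p) + (q + r*b*y*p)ᴴ * (q + r*b*y*p) = 1 := by
    calc (u*a*p)ᴴ * (u*a*p) + (q + r*b*y*p)ᴴ * (q + r*b*y*p)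
        = pᴴ*aᴴ*(uᴴ*u)*(a*p) + qᴴ*q + (qᴴ*r)*(b*(y*p)) + pᴴ*yᴴ*bᴴ*(rᴴ*q)
            + pᴴ*yᴴ*bᴴ*(rᴴ*r)*(b*(y*p)) := by
          simp only [Matrix.conjTranspose_mul, Matrix.conjTranspose_add]
          noncomm_ring
      _ = pᴴ*aᴴ*(1 - yᴴ*y)*(a*p) + (1 - pᴴ*p) + (-(pᴴ*x))*(b*(y*p)) + pᴴ*yᴴ*bᴴ*(-(xᴴ*p))
            + pᴴ*yᴴ*bᴴ*(1 - xᴴ*x)*(b*(y*p)) := by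
          rw [hf1, he1, he2, he2', he3]
      _ = pᴴ*(aᴴ*a)*p - pᴴ*(aᴴ*(yᴴ*(y*a)))*p + 1 - pᴴ*p - pᴴ*((x*b)*y)*p
            - pᴴ*((yᴴ*bᴴ)*xᴴ)*p + pᴴ*((yᴴ*bᴴ)*(b*y))*p
            - pᴴ*((yᴴ*bᴴ)*(xᴴ*((x*b)*y)))*p := by noncomm_ring
      _ = pᴴ*(aᴴ*a)*p - pᴴ*(aᴴ*(yᴴ*(b*y)))*p + 1 - pᴴ*p - pᴴ*((a*x)*y)*p
            - pᴴ*((aᴴ*yᴴ)*xᴴ)*p + pᴴ*((aᴴ*yᴴ)*(b*y))*p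
            - pᴴ*((aᴴ*yᴴ)*(xᴴ*((a*x)*y)))*p := by rw [hya, hxb, hxb']
      _ = pᴴ*(aᴴ*a)*p + 1 - pᴴ*p - pᴴ*(a*(x*y))*p - pᴴ*(aᴴ*(yᴴ*xᴴ))*p
            - pᴴ*((aᴴ*(yᴴ*xᴴ))*(a*(x*y)))*p := by noncomm_ring
      _ = pᴴ*(aᴴ*a)*p + 1 - pᴴ*p - pᴴ*(a - 1)*p - pᴴ*(aᴴ - 1)*p
            - pᴴ*((aᴴ - 1)*(a - 1))*p := by rw [haxy, haxy']
      _ = 1 := by noncomm_ring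
  have key22 : (v + u*a*x*w)ᴴ * (v + u*a*x*w) + (r*b*w)ᴴ * (r*b*w) = 1 := by
    calc (v + u*a*x*w)ᴴ * (v + u*a*x*w) + (r*b*w)ᴴ * (r*b*w)
        = vᴴ*v + (vᴴ*u)*(a*(x*w)) + wᴴ*xᴴ*aᴴ*(uᴴ*v) + wᴴ*xᴴ*aᴴ*(uᴴ*u)*(a*(x*w))
            + wᴴ*bᴴ*(rᴴ*r)*(b*w) := by
          simp only [Matrix.conjTranspose_mul, Matrix.conjTranspose_add]
          noncomm_ring
      _ = (1 - wᴴ*w) + (-(wᴴ*y))*(a*(x*w)) + wᴴ*xᴴ*aᴴ*(-(yᴴ*w))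
            + wᴴ*xᴴ*aᴴ*(1 - yᴴ*y)*(a*(x*w)) + wᴴ*bᴴ*(1 - xᴴ*x)*(b*w) := by
          rw [hf3, hf2', hf2, hf1, he3]
      _ = 1 - wᴴ*w - wᴴ*((y*a)*x)*w - wᴴ*((xᴴ*aᴴ)*yᴴ)*w + wᴴ*((xᴴ*aᴴ)*(a*x))*w
            - wᴴ*((xᴴ*aᴴ)*(yᴴ*((y*a)*x)))*w + wᴴ*(bᴴ*b)*w
            - wᴴ*(bᴴ*((xᴴ*x)*b))*w := by noncomm_ring
      _ = 1 - wᴴ*w - wᴴ*((b*y)*x)*w - wᴴ*((bᴴ*xᴴ)*yᴴ)*w + wᴴ*((bᴴ*xᴴ)*(x*b))*w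
            - wᴴ*((bᴴ*xᴴ)*(yᴴ*((b*y)*x)))*w + wᴴ*(bᴴ*b)*w
            - wᴴ*(bᴴ*((xᴴ*x)*b))*w := by rw [hya, hya', ← hxb]
      _ = 1 - wᴴ*w - wᴴ*(b*(y*x))*w - wᴴ*(bᴴ*(xᴴ*yᴴ))*w
            - wᴴ*((bᴴ*(xᴴ*yᴴ))*(b*(y*x)))*w + wᴴ*(bᴴ*b)*w := by noncomm_ring
      _ = 1 - wᴴ*w - wᴴ*(b - 1)*w - wᴴ*(bᴴ - 1)*w
            - wᴴ*((bᴴ - 1)*(b - 1))*w + wᴴ*(bᴴ*b)*w := by rw [hbyx, hbyx']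
      _ = 1 := by noncomm_ring
  have key12 : (u*a*p)ᴴ * (v + u*a*x*w) + (q + r*b*y*p)ᴴ * (r*b*w) = 0 := by
    calc (u*a*p)ᴴ * (v + u*a*x*w) + (q + r*b*y*p)ᴴ * (r*b*w)
        = pᴴ*aᴴ*(uᴴ*v) + pᴴ*aᴴ*(uᴴ*u)*(a*(x*w)) + (qᴴ*r)*(b*w)
            + pᴴ*yᴴ*bᴴ*(rᴴ*r)*(b*w) := by
          simp only [Matrix.conjTranspose_mul, Matrix.conjTranspose_add]
          noncomm_ring
      _ = pᴴ*aᴴ*(-(yᴴ*w)) + pᴴ*aᴴ*(1 - yᴴ*y)*(a*(x*w)) + (-(pᴴ*x))*(b*w)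
            + pᴴ*yᴴ*bᴴ*(1 - xᴴ*x)*(b*w) := by rw [hf2, hf1, he2, he3]
      _ = -(pᴴ*((aᴴ*yᴴ)*w)) + pᴴ*(aᴴ*(a*x))*w - pᴴ*(aᴴ*(yᴴ*((y*a)*x)))*w
            - pᴴ*((x*b)*w) + pᴴ*((yᴴ*bᴴ)*b)*w
            - pᴴ*((yᴴ*bᴴ)*(xᴴ*(x*b)))*w := by noncomm_ring
      _ = -(pᴴ*((aᴴ*yᴴ)*w)) + pᴴ*(aᴴ*(a*x))*w - pᴴ*(aᴴ*(yᴴ*((b*y)*x)))*w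
            - pᴴ*((a*x)*w) + pᴴ*((aᴴ*yᴴ)*b)*w
            - pᴴ*((aᴴ*yᴴ)*(xᴴ*(a*x)))*w := by rw [hya, hxb, hxb']
      _ = -(pᴴ*((aᴴ*yᴴ)*w)) + pᴴ*(aᴴ*(a*x))*w - pᴴ*((aᴴ*yᴴ)*(b*(y*x)))*w
            - pᴴ*((a*x)*w) + pᴴ*((aᴴ*yᴴ)*b)*w
            - pᴴ*((aᴴ*(yᴴ*xᴴ))*(a*x))*w := by noncomm_ring
      _ = -(pᴴ*((aᴴ*yᴴ)*w)) + pᴴ*(aᴴ*(a*x))*w - pᴴ*((aᴴ*yᴴ)*(b - 1))*w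
            - pᴴ*((a*x)*w) + pᴴ*((aᴴ*yᴴ)*b)*w
            - pᴴ*((aᴴ - 1)*(a*x))*w := by rw [hbyx, haxy']
      _ = 0 := by noncomm_ring
  have key21 : (v + u*a*x*w)ᴴ * (u*a*p) + (r*b*w)ᴴ * (q + r*b*y*p) = 0 := by
    calc (v + u*a*x*w)ᴴ * (u*a*p) + (r*b*w)ᴴ * (q + r*b*y*p)
        = ((u*a*p)ᴴ * (v + u*a*x*w) + (q + r*b*y*p)ᴴ * (r*b*w))ᴴ := by
          simp only [Matrix.conjTranspose_add, Matrix.conjTranspose_mul,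
            Matrix.conjTranspose_conjTranspose]
          try noncomm_ring
      _ = (0 : Matrix (Fin n) (Fin n) ℂ)ᴴ := by rw [key12]
      _ = 0 := Matrix.conjTranspose_zero
  rw [Matrix.mem_unitaryGroup_iff', Matrix.star_eq_conjTranspose,
    Matrix.fromBlocks_conjTranspose, Matrix.fromBlocks_multiply,
    ← Matrix.fromBlocks_one, Matrix.fromBlocks_inj]
  exact ⟨key11, key12, key21, key22⟩
end

section
/- Let n be odd and let S = [[T₊,R₋],[R₊,T₋]] be a 2n×2n unitary matrix with R₊ skew-symmetric. If ‖T₊‖ ≤ ε (operator norm), then ε ≥ 1. Equivalently, the transmission block T₊ of an odd-dimensional FTR-symmetric scattering matrix has operator norm at least 1 (hence exactly 1). -/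
/-!
Unitarity of `S` gives `T₊ᴴ T₊ + R₊ᴴ R₊ = 1`, and a skew-symmetric matrix of odd size is
singular, so `T₊` is isometric on the nonzero kernel of `R₊`.
-/

open Matrix

namespace ContinuousLinearMap

theorem one_le_opNorm_of_norm_map {𝕜 E F : Type*} [NontriviallyNormedField 𝕜]
    [SeminormedAddCommGroup E] [NormedSpace 𝕜 E] [SeminormedAddCommGroup F] [NormedSpace 𝕜 F]
    (A : E →L[𝕜] F) {x : E} (hx : ‖x‖ ≠ 0) (hAx : ‖A x‖ = ‖x‖) : 1 ≤ ‖A‖ := by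
  have h := A.le_opNorm x
  rw [hAx] at h
  exact le_of_mul_le_mul_right (by simpa using h) ((norm_nonneg x).lt_of_ne' hx)

theorem norm_map_of_adjoint_comp_self_apply {𝕜 E F : Type*} [RCLike 𝕜]
    [NormedAddCommGroup E] [InnerProductSpace 𝕜 E] [CompleteSpace E]
    [NormedAddCommGroup F] [InnerProductSpace 𝕜 F] [CompleteSpace F]
    (A : E →L[𝕜] F) {x : E} (hx : (adjoint A ∘L A) x = x) : ‖A x‖ = ‖x‖ := by
  have h := A.apply_norm_sq_eq_inner_adjoint_left x
  rw [hx, inner_self_eq_norm_sq] at h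
  exact (sq_eq_sq₀ (norm_nonneg _) (norm_nonneg _)).mp h

end ContinuousLinearMap

namespace Matrix

variable {ι : Type*} [Fintype ι] [DecidableEq ι]

theorem det_eq_zero_of_transpose_eq_neg {R : Type*} [CommRing R] [NoZeroDivisors R]
    [CharZero R] {A : Matrix ι ι R} (hodd : Odd (Fintype.card ι)) (hA : Aᵀ = -A) :
    A.det = 0 := by
  refine CharZero.eq_neg_self_iff.mp ?_
  calc A.det = Aᵀ.det := (det_transpose A).symm
    _ = -A.det := by rw [hA, det_neg, hodd.neg_one_pow, neg_one_mul]

theorem conjTranspose_mul_add_of_fromBlocks_mem_unitaryGroup {κ R : Type*} [Fintype κ]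
    [DecidableEq κ] [CommRing R] [StarRing R] {A : Matrix ι ι R} {B : Matrix ι κ R}
    {C : Matrix κ ι R} {D : Matrix κ κ R}
    (hU : fromBlocks A B C D ∈ unitaryGroup (ι ⊕ κ) R) : Aᴴ * A + Cᴴ * C = 1 := by
  have h := hU.1
  rw [star_eq_conjTranspose, fromBlocks_conjTranspose, fromBlocks_multiply,
    ← fromBlocks_one] at h
  exact (fromBlocks_inj.mp h).1

theorem one_le_norm_toEuclideanCLM_of_mulVec_eq {𝕜 : Type*} [RCLike 𝕜] (A : Matrix ι ι 𝕜)
    {v : ι → 𝕜} (hv : v ≠ 0) (hAv : (Aᴴ * A) *ᵥ v = v) :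
    1 ≤ ‖toEuclideanCLM (𝕜 := 𝕜) (n := ι) A‖ := by
  set T := toEuclideanCLM (𝕜 := 𝕜) (n := ι)
  have hTT : ContinuousLinearMap.adjoint (T A) ∘L T A = T (Aᴴ * A) := by
    rw [← ContinuousLinearMap.star_eq_adjoint, ← map_star, map_mul]
    rfl
  refine (T A).one_le_opNorm_of_norm_map (x := WithLp.toLp 2 v) (by simpa using hv) ?_
  refine (T A).norm_map_of_adjoint_comp_self_apply ?_
  rw [hTT, toEuclideanCLM_toLp, hAv]

end Matrix

/-- Obstruction to Anderson localization: for `n` odd and a unitary `2n×2n` scattering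
matrix `S = [[T₊,R₋],[R₊,T₋]]` with `R₊` skew-symmetric, if the operator norm of the
transmission block `T₊` is at most `ε`, then `ε ≥ 1`. -/
theorem transmission_opNorm_ge_one (n : ℕ) (hn : Odd n)
    (Tp Rm Rp Tm : Matrix (Fin n) (Fin n) ℂ)
    (hS : Matrix.fromBlocks Tp Rm Rp Tm ∈ Matrix.unitaryGroup (Fin n ⊕ Fin n) ℂ)
    (hRp : Rpᵀ = -Rp)
    (ε : ℝ)
    (hT : ‖(Matrix.toEuclideanCLM (𝕜 := ℂ) (n := Fin n)) Tp‖ ≤ ε) :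
    1 ≤ ε := by
  have hdet : Rp.det = 0 :=
    det_eq_zero_of_transpose_eq_neg (by rwa [Fintype.card_fin]) hRp
  obtain ⟨v, hv, hRpv⟩ := exists_mulVec_eq_zero_iff.mpr hdet
  have hTpv : (Tpᴴ * Tp) *ᵥ v = v := by
    have h := congrArg (· *ᵥ v) (conjTranspose_mul_add_of_fromBlocks_mem_unitaryGroup hS)
    simpa [add_mulVec, ← mulVec_mulVec, hRpv] using h
  exact (Tp.one_le_norm_toEuclideanCLM_of_mulVec_eq hv hTpv).trans hT
end
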